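/- Let C ∈ ℝ be an arbitrary clipping constant. Let d, k ≥ 1, let W, W' : Fin k → ℝ^d and b, b' : Fin k → ℝ with W' j = W j and b' j = b j for all j ≠ g. Define z_j(x) = min(⟪x, W j⟫ + b j, C), h(x) = max_{j ∈ Fin k} z_j(x), and z'_j, h' the same with (W', b'). If x ∈ ℝ^d satisfies z_i(x) = C for some i ≠ g, then h'(x) = h(x). -/

import Mathlib

open RealInnerProductSpace

/-- Maxout unit clipped at constant `C`:
`h(x) = max_j min(⟪x, W j⟫ + b j, C)`. -/
noncomputable def clippedMaxoutC {d k : ℕ} (C : ℝ) (hk : 1 ≤ k)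
    (W : Fin k → EuclideanSpace ℝ (Fin d)) (b : Fin k → ℝ)
    (x : EuclideanSpace ℝ (Fin d)) : ℝ :=
  Finset.univ.sup' (Finset.univ_nonempty_iff.mpr ⟨⟨0, hk⟩⟩)
    fun j => min (⟪x, W j⟫ + b j) C

theorem Finset.sup'_min_eq_of_le {ι α : Type*} [LinearOrder α] {s : Finset ι}
    (H : s.Nonempty) (f : ι → α) {c : α} {i : ι} (hi : i ∈ s) (hc : c ≤ f i) :
    s.sup' H (fun j => min (f j) c) = c :=
  le_antisymm (Finset.sup'_le _ _ fun _ _ => min_le_right _ _)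
    (calc c = min (f i) c := (min_eq_right hc).symm
      _ ≤ _ := Finset.le_sup' (fun j => min (f j) c) hi)

theorem clippedMaxoutC_eq_of_min_eq {d k : ℕ} {C : ℝ} (hk : 1 ≤ k)
    {W : Fin k → EuclideanSpace ℝ (Fin d)} {b : Fin k → ℝ} {x : EuclideanSpace ℝ (Fin d)}
    {i : Fin k} (hi : min (⟪x, W i⟫ + b i) C = C) :
    clippedMaxoutC C hk W b x = C :=
  Finset.sup'_min_eq_of_le _ _ (Finset.mem_univ i) (min_eq_right_iff.mp hi)

theorem clippedMaxoutC_update_no_interference_general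
    (C : ℝ) {d k : ℕ} (hk : 1 ≤ k)
    (W W' : Fin k → EuclideanSpace ℝ (Fin d)) (b b' : Fin k → ℝ) (g : Fin k)
    (hW : ∀ j, j ≠ g → W' j = W j) (hb : ∀ j, j ≠ g → b' j = b j)
    (x : EuclideanSpace ℝ (Fin d)) (i : Fin k) (hig : i ≠ g)
    (hzi : min (⟪x, W i⟫ + b i) C = C) :
    clippedMaxoutC C hk W' b' x = clippedMaxoutC C hk W b x := by
  have hzi' : min (⟪x, W' i⟫ + b' i) C = C := by rw [hW i hig, hb i hig, hzi]
  rw [clippedMaxoutC_eq_of_min_eq hk hzi, clippedMaxoutC_eq_of_min_eq hk hzi']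

theorem clippedMaxoutC_update_no_interference
    (C : ℝ) {d k : ℕ} (hd : 1 ≤ d) (hk : 1 ≤ k)
    (W W' : Fin k → EuclideanSpace ℝ (Fin d)) (b b' : Fin k → ℝ) (g : Fin k)
    (hW : ∀ j, j ≠ g → W' j = W j) (hb : ∀ j, j ≠ g → b' j = b j)
    (x : EuclideanSpace ℝ (Fin d)) (i : Fin k) (hig : i ≠ g)
    (hzi : min (⟪x, W i⟫ + b i) C = C) :
    clippedMaxoutC C hk W' b' x = clippedMaxoutC C hk W b x :=
  clippedMaxoutC_update_no_interference_general C hk W W' b b' g hW hb x i hig hzi
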